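/- The transition matrix of the money-exchange chain is symmetric: p(ξ, ξ') = p(ξ', ξ) for all ξ, ξ' ∈ S. In particular the chain is reversible with respect to, and doubly stochastic for, the uniform measure on S. -/

import Mathlib

open scoped Classical
open Finset

section MoneyExchange

variable {V : Type*} [Fintype V] [DecidableEq V] {K : ℕ}

/-- Move one coin from `x` to `y`. -/
def tau (x y : V) (ξ : V → ℤ) : V → ℤ :=
  fun z => ξ z - (if z = x then 1 else 0) + (if z = y then 1 else 0)

/-- Total (nonpositive) debt of the customers of bank `i`:
`∑_{z ∈ Vᵢ} ξ(z) · 1{ξ(z) < 0}`. -/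
def bankDebt (bank : V → Fin K) (ξ : V → ℤ) (i : Fin K) : ℤ :=
  ∑ z ∈ univ.filter fun z => bank z = i, min (ξ z) 0

/-- Admissible configurations: total money `M` and each bank lends at most `Rᵢ`. -/
def admissible (bank : V → Fin K) (R : Fin K → ℕ) (M : ℕ) (ξ : V → ℤ) : Prop :=
  (∑ z, ξ z) = (M : ℤ) ∧ ∀ i, -(R i : ℤ) ≤ bankDebt bank ξ i

/-- The move from `x` is allowed in `ξ`: `x` has a coin or its bank is nonempty. -/
def allowed (bank : V → Fin K) (R : Fin K → ℕ) (ξ : V → ℤ) (x : V) : Prop :=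
  0 < ξ x ∨ -(R (bank x) : ℤ) < bankDebt bank ξ (bank x)

/-- One-step transition probability of the money-exchange chain: each ordered
adjacent pair `(x, y)` is chosen with probability `1/(2|E|)`, and a coin moves
from `x` to `y` whenever the move from `x` is allowed; otherwise nothing happens. -/
noncomputable def step (G : SimpleGraph V) (bank : V → Fin K) (R : Fin K → ℕ)
    (ξ ξ' : V → ℤ) : ℝ :=
  (((univ.filter fun pq : V × V =>
        G.Adj pq.1 pq.2 ∧ allowed bank R ξ pq.1 ∧ tau pq.1 pq.2 ξ = ξ').card : ℝ)
      + if ξ' = ξ then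
          ((univ.filter fun pq : V × V =>
            G.Adj pq.1 pq.2 ∧ ¬ allowed bank R ξ pq.1).card : ℝ)
        else 0)
    / ((univ.filter fun pq : V × V => G.Adj pq.1 pq.2).card : ℝ)

/-- `t`-step transition probability of the money-exchange chain. -/
noncomputable def stepT (G : SimpleGraph V) (bank : V → Fin K) (R : Fin K → ℕ) :
    ℕ → (V → ℤ) → (V → ℤ) → ℝ
  | 0, ξ, ξ' => if ξ = ξ' then 1 else 0
  | t + 1, ξ, ξ' =>
      ∑ η ∈ insert ξ ((univ.filter fun pq : V × V => G.Adj pq.1 pq.2).image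
          fun pq => tau pq.1 pq.2 ξ),
        step G bank R ξ η * stepT G bank R t η ξ'

end MoneyExchange

/-! Off the diagonal, `p(ξ, ξ')` counts the ordered edges `(x, y)` along which an allowed move
turns `ξ` into `ξ'`. Reversing the edge is a bijection onto the moves turning `ξ'` into `ξ`:
the coin that has just arrived at `y` may always go back. Either `y` now holds a coin, or `y`
paid back one unit of debt; then the debt of `y`'s bank shrank, unless `x` (being allowed to
move while in debt) belongs to the same bank, which was therefore strictly below its limit. -/

lemma tau_tau {V : Type*} [DecidableEq V] (x y : V) (ξ : V → ℤ) : tau y x (tau x y ξ) = ξ := by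
  funext z; simp only [tau]; ring

section MoneyExchange

variable {V : Type*} [Fintype V] [DecidableEq V] {K : ℕ}

lemma bankDebt_tau (bank : V → Fin K) (ξ : V → ℤ) {x y : V} (hxy : x ≠ y) (i : Fin K) :
    bankDebt bank (tau x y ξ) i = bankDebt bank ξ i
      + (if bank x = i then min (ξ x - 1) 0 - min (ξ x) 0 else 0)
      + (if bank y = i then min (ξ y + 1) 0 - min (ξ y) 0 else 0) := by
  have pointwise : ∀ z, (if bank z = i then min (tau x y ξ z) 0 else 0)
      = (if bank z = i then min (ξ z) 0 else 0)
        + (if z = x then (if bank x = i then min (ξ x - 1) 0 - min (ξ x) 0 else 0) else 0)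
        + (if z = y then (if bank y = i then min (ξ y + 1) 0 - min (ξ y) 0 else 0) else 0) := by
    intro z
    by_cases hzx : z = x <;> by_cases hzy : z = y <;>
      simp_all [tau] <;> split_ifs <;> omega
  simp only [bankDebt, sum_filter]
  rw [sum_congr rfl fun z _ => pointwise z, sum_add_distrib, sum_add_distrib,
    sum_ite_eq' univ x, sum_ite_eq' univ y]
  simp

lemma allowed_tau {bank : V → Fin K} {R : Fin K → ℕ} {ξ : V → ℤ} {x y : V} (hxy : x ≠ y)
    (hξ : ∀ i, -(R i : ℤ) ≤ bankDebt bank ξ i) (hx : allowed bank R ξ x) :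
    allowed bank R (tau x y ξ) y := by
  by_cases hy : 0 < ξ y + 1
  · left
    simpa [tau, hxy.symm] using hy
  · right
    rw [bankDebt_tau bank ξ hxy (bank y), if_pos rfl]
    have hdebt := hξ (bank y)
    by_cases hb : bank x = bank y
    · rw [if_pos hb]
      rcases hx with hpos | hdebt_x
      · omega
      · rw [hb] at hdebt_x; omega
    · rw [if_neg hb]; omega

noncomputable def moves (G : SimpleGraph V) (bank : V → Fin K) (R : Fin K → ℕ) (ξ ξ' : V → ℤ) :
    Finset (V × V) :=
  univ.filter fun pq => G.Adj pq.1 pq.2 ∧ allowed bank R ξ pq.1 ∧ tau pq.1 pq.2 ξ = ξ'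

lemma step_of_ne {G : SimpleGraph V} {bank : V → Fin K} {R : Fin K → ℕ} {ξ ξ' : V → ℤ}
    (h : ξ' ≠ ξ) :
    step G bank R ξ ξ' = (moves G bank R ξ ξ').card
      / ((univ.filter fun pq : V × V => G.Adj pq.1 pq.2).card : ℝ) := by
  rw [step, if_neg h, add_zero, moves]

lemma swap_mem_moves {G : SimpleGraph V} {bank : V → Fin K} {R : Fin K → ℕ} {ξ ξ' : V → ℤ}
    (hξ : ∀ i, -(R i : ℤ) ≤ bankDebt bank ξ i) {pq : V × V} (h : pq ∈ moves G bank R ξ ξ') :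
    pq.swap ∈ moves G bank R ξ' ξ := by
  simp only [moves, mem_filter, mem_univ, true_and, Prod.fst_swap, Prod.snd_swap] at h ⊢
  obtain ⟨hadj, hallowed, rfl⟩ := h
  exact ⟨hadj.symm, allowed_tau hadj.ne hξ hallowed, tau_tau _ _ _⟩

lemma card_moves_comm {G : SimpleGraph V} {bank : V → Fin K} {R : Fin K → ℕ} {ξ ξ' : V → ℤ}
    (hξ : ∀ i, -(R i : ℤ) ≤ bankDebt bank ξ i) (hξ' : ∀ i, -(R i : ℤ) ≤ bankDebt bank ξ' i) :
    (moves G bank R ξ ξ').card = (moves G bank R ξ' ξ).card :=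
  card_nbij' Prod.swap Prod.swap (fun _ h => swap_mem_moves hξ h)
    (fun _ h => swap_mem_moves hξ' h) (fun _ _ => rfl) (fun _ _ => rfl)

end MoneyExchange

theorem symmetry_general {V : Type*} [Fintype V] [DecidableEq V] {K : ℕ}
    (G : SimpleGraph V)
    (bank : V → Fin K) (R : Fin K → ℕ) (M : ℕ)
    (ξ ξ' : V → ℤ) (hξ : admissible bank R M ξ) (hξ' : admissible bank R M ξ') :
    step G bank R ξ ξ' = step G bank R ξ' ξ := by
  rcases eq_or_ne ξ' ξ with rfl | h
  · rfl
  · rw [step_of_ne h, step_of_ne h.symm, card_moves_comm hξ.2 hξ'.2]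

theorem symmetry {V : Type*} [Fintype V] [DecidableEq V] {K : ℕ} (hK : 1 ≤ K)
    (G : SimpleGraph V) (hG : G.Connected) (hN : 2 ≤ Fintype.card V)
    (bank : V → Fin K) (R : Fin K → ℕ) (M : ℕ)
    (ξ ξ' : V → ℤ) (hξ : admissible bank R M ξ) (hξ' : admissible bank R M ξ') :
    step G bank R ξ ξ' = step G bank R ξ' ξ :=
  symmetry_general G bank R M ξ ξ' hξ hξ'
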